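/- arXiv:1804.02244 — 9 statements merged into one kernel-verified Lean document; each statement's English description precedes it below -/
import Mathlib

section
/- The translation T : ℝ^d → ℝ^d given by T(x) = x + e₁, where e₁ is the first standard basis vector, does not have the topological shadowing property. -/
open Metric Filter Topology

/-- `n`-fold composition of a homeomorphism, `n : ℕ`. -/
def hpow {X : Type*} [TopologicalSpace X] (f : X ≃ₜ X) : ℕ → X ≃ₜ X
  | 0 => Homeomorph.refl X
  | n + 1 => (hpow f n).trans f

/-- `n`-th iterate of a homeomorphism, `n : ℤ` (negative powers use the inverse). -/
def hzpow {X : Type*} [TopologicalSpace X] (f : X ≃ₜ X) : ℤ → X ≃ₜ X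
  | Int.ofNat n => hpow f n
  | Int.negSucc n => (hpow f (n + 1)).symm

/-- `(xₙ)ₙ∈ℤ` is a `δ`-pseudo-orbit for `f`: `d(f(xₙ), xₙ₊₁) < δ(f(xₙ))` for all `n`. -/
def IsPseudoOrbit {X : Type*} [MetricSpace X] (f : X → X) (δ : X → ℝ) (x : ℤ → X) : Prop :=
  ∀ n : ℤ, dist (f (x n)) (x (n + 1)) < δ (f (x n))

/-- Topological shadowing property (strict shadowing inequality). -/
def TSP {X : Type*} [MetricSpace X] (f : X ≃ₜ X) : Prop :=
  ∀ ε : X → ℝ, Continuous ε → (∀ p, 0 < ε p) →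
    ∃ δ : X → ℝ, Continuous δ ∧ (∀ p, 0 < δ p) ∧
      ∀ x : ℤ → X, IsPseudoOrbit f δ x →
        ∃ y : X, ∀ n : ℤ, dist (hzpow f n y) (x n) < ε (x n)

/-! Take `ε(p) = exp (-‖p‖)`. For the corresponding `δ`, the pseudo-orbit that follows the orbit
`n • v` of `0` and jumps by some `w ≠ 0` with `‖w‖ < δ v` at time `1` would be `ε`-shadowed by a
point `y`. Since `ε` tends to `0` at both ends of every orbit of the translation, the orbit
`y + n • v` is asymptotic to the pseudo-orbit at both ends: `n → -∞` forces `y = 0` and `n → +∞`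
forces `y = w`. -/

section AddCommGroup

variable {G : Type*} [AddCommGroup G]

def jumpOrbit (v w : G) (n : ℤ) : G :=
  n • v + if 0 < n then w else 0

lemma jumpOrbit_eventually_atBot (v w : G) : ∀ᶠ n in atBot, jumpOrbit v w n = n • v + 0 :=
  (eventually_le_atBot 0).mono fun n hn => by simp [jumpOrbit, hn.not_gt]

lemma jumpOrbit_eventually_atTop (v w : G) : ∀ᶠ n in atTop, jumpOrbit v w n = n • v + w :=
  (eventually_gt_atTop 0).mono fun n hn => by simp [jumpOrbit, hn]

variable [TopologicalSpace G] [ContinuousAdd G]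

lemma hpow_addRight (v : G) (n : ℕ) (y : G) : hpow (Homeomorph.addRight v) n y = y + n • v := by
  induction n with
  | zero => simp [hpow]
  | succ n ih => simp [hpow, ih, succ_nsmul, add_assoc]

lemma hzpow_addRight (v : G) (n : ℤ) (y : G) : hzpow (Homeomorph.addRight v) n y = y + n • v := by
  cases n with
  | ofNat n => simp [hzpow, hpow_addRight]
  | negSucc n =>
    apply (hpow (Homeomorph.addRight v) (n + 1)).injective
    rw [hzpow, Homeomorph.apply_symm_apply, hpow_addRight, negSucc_zsmul]
    abel

end AddCommGroup

section NormedAddCommGroup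

variable {E : Type*} [NormedAddCommGroup E]

lemma isPseudoOrbit_jumpOrbit {v w : E} {δ : E → ℝ} (hδ : ∀ p, 0 < δ p) (hw : ‖w‖ < δ v) :
    IsPseudoOrbit (Homeomorph.addRight v) δ (jumpOrbit v w) := by
  intro n
  rcases lt_trichotomy n 0 with hn | rfl | hn
  · have : n + 1 ≤ 0 := hn
    simpa [jumpOrbit, hn.not_gt, this.not_gt, add_zsmul] using hδ _
  · simpa [jumpOrbit] using hw
  · simpa [jumpOrbit, hn, hn.trans (lt_add_one n), add_zsmul, add_right_comm] using hδ _

variable [NormedSpace ℝ E]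

lemma tendsto_norm_zsmul_add_cofinite {v : E} (hv : v ≠ 0) (a : E) :
    Tendsto (fun n : ℤ => ‖n • v + a‖) cofinite atTop := by
  have hlower : Tendsto (fun n : ℤ => ‖n‖ * ‖v‖ - ‖a‖) cofinite atTop := by
    rw [← cocompact_eq_cofinite]
    exact tendsto_atTop_add_const_right _ _
      (tendsto_norm_cocompact_atTop.atTop_mul_const (norm_pos_iff.2 hv))
  refine tendsto_atTop_mono (fun n => ?_) hlower
  rw [← Int.norm_cast_real, ← norm_zsmul ℝ]
  exact norm_sub_le_norm_add (n • v) a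

lemma eq_of_dist_lt_exp_neg_norm {v : E} (hv : v ≠ 0) {l : Filter ℤ} [l.NeBot] (hl : l ≤ cofinite)
    {x : ℤ → E} {a y : E} (hx : ∀ᶠ n in l, x n = n • v + a)
    (hy : ∀ n, dist (y + n • v) (x n) < Real.exp (-‖x n‖)) : y = a := by
  have hε : Tendsto (fun n : ℤ => Real.exp (-‖n • v + a‖)) l (𝓝 0) :=
    Real.tendsto_exp_neg_atTop_nhds_zero.comp ((tendsto_norm_zsmul_add_cofinite hv a).mono_left hl)
  refine dist_le_zero.mp (ge_of_tendsto hε (hx.mono fun n hn => ?_))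
  have := hy n
  rw [hn, add_comm (n • v) a, dist_add_right, add_comm a] at this
  exact this.le

theorem not_TSP_addRight {v : E} (hv : v ≠ 0) : ¬ TSP (Homeomorph.addRight v) := by
  intro h
  obtain ⟨δ, -, hδpos, hδ⟩ := h (fun p => Real.exp (-‖p‖)) (by fun_prop) (fun _ => Real.exp_pos _)
  have : Nontrivial E := nontrivial_of_ne v 0 hv
  obtain ⟨w, hw⟩ := exists_norm_eq E (half_pos (hδpos v)).le
  obtain ⟨y, hy⟩ := hδ (jumpOrbit v w)
    (isPseudoOrbit_jumpOrbit hδpos (hw ▸ half_lt_self (hδpos v)))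
  simp only [hzpow_addRight] at hy
  have hy0 : y = 0 :=
    eq_of_dist_lt_exp_neg_norm hv atBot_le_cofinite (jumpOrbit_eventually_atBot v w) hy
  have hyw : y = w :=
    eq_of_dist_lt_exp_neg_norm hv atTop_le_cofinite (jumpOrbit_eventually_atTop v w) hy
  have hw0 : ‖w‖ = 0 := by rw [← hyw, hy0, norm_zero]
  exact (half_pos (hδpos v)).ne' (hw ▸ hw0)

end NormedAddCommGroup

/-- The translation `x ↦ x + e₁` of `ℝ^d` does not have the topological shadowing property. -/
theorem translation_not_TSP (d : ℕ) (hd : 0 < d) :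
    ¬ TSP (Homeomorph.addRight (EuclideanSpace.single (⟨0, hd⟩ : Fin d) (1 : ℝ))) :=
  not_TSP_addRight (by simp)
end

section
/- The linear map f : ℝ² → ℝ² given by f(x,y) = (2x, y/2) does not have the topological shadowing property (with respect to the sup-norm metric on ℝ²). -/
open Metric Filter Topology

noncomputable abbrev Fh : (ℝ × ℝ) ≃ₜ (ℝ × ℝ) :=
  (Homeomorph.mulLeft₀ (2 : ℝ) two_ne_zero).prodCongr
    (Homeomorph.mulLeft₀ ((2 : ℝ)⁻¹) (by norm_num))

lemma Fh_apply (p : ℝ × ℝ) : Fh p = (2 * p.1, 2⁻¹ * p.2) := rfl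

lemma hpow_Fh (n : ℕ) (p : ℝ × ℝ) : hpow Fh n p = ((2:ℝ)^n * p.1, ((2:ℝ)⁻¹)^n * p.2) := by
  induction n with
  | zero => simp [hpow]
  | succ n ih =>
    show Fh (hpow Fh n p) = _
    rw [ih, Fh_apply]
    simp only [Prod.mk.injEq]
    constructor <;> ring

lemma hzpow_Fh_negSucc (m : ℕ) (p : ℝ × ℝ) :
    hzpow Fh (Int.negSucc m) p = (((2:ℝ)^(m+1))⁻¹ * p.1, (2:ℝ)^(m+1) * p.2) := by
  show (hpow Fh (m+1)).symm p = _
  apply (hpow Fh (m+1)).injective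
  rw [Homeomorph.apply_symm_apply, hpow_Fh]
  have h2 : ((2:ℝ)^(m+1)) ≠ 0 := by positivity
  have : ((2:ℝ)⁻¹)^(m+1) = ((2:ℝ)^(m+1))⁻¹ := by rw [inv_pow]
  rw [this]
  ext <;> simp

lemma hzpow_Fh_ofNat (n : ℕ) (p : ℝ × ℝ) :
    hzpow Fh ((n : ℤ)) p = ((2:ℝ)^n * p.1, ((2:ℝ)⁻¹)^n * p.2) := hpow_Fh n p


/-- The linear map `(x, y) ↦ (2x, y/2)` of the plane (with the sup-norm metric, which is
the product metric on `ℝ × ℝ`) does not have the topological shadowing property. -/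
theorem hyperbolic_not_TSP :
    ¬ TSP ((Homeomorph.mulLeft₀ (2 : ℝ) two_ne_zero).prodCongr
        (Homeomorph.mulLeft₀ ((2 : ℝ)⁻¹) (by norm_num))) := by
  intro h
  set ε : ℝ × ℝ → ℝ := fun p => (1 + p.2 ^ 4)⁻¹ with hε
  have hεc : Continuous ε := by
    apply Continuous.inv₀
    · fun_prop
    · intro p; positivity
  have hεpos : ∀ p, 0 < ε p := fun p => by positivity
  have hεle1 : ∀ p, ε p ≤ 1 := by
    intro p
    have h1 : (1:ℝ) ≤ 1 + p.2 ^ 4 := by nlinarith [sq_nonneg (p.2^2)]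
    exact inv_le_one_of_one_le₀ h1
  obtain ⟨δ, hδc, hδpos, hsh⟩ := h ε hεc hεpos
  -- the kick size
  set c : ℝ := min (δ (0, 2⁻¹)) 1 / 2 with hc
  have hmin : 0 < min (δ (0, 2⁻¹)) 1 := lt_min (hδpos _) one_pos
  have hc0 : 0 < c := by rw [hc]; positivity
  have hcδ : c < δ (0, 2⁻¹) := by
    have h1 : min (δ (0, 2⁻¹)) 1 ≤ δ (0, 2⁻¹) := min_le_left _ _
    rw [hc]; linarith
  -- the pseudo-orbit
  set x : ℤ → ℝ × ℝ := fun n => (if 0 < n then (2:ℝ)^(n-1) * c else 0, (2:ℝ)^(-n)) with hx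
  have hsnd : ∀ n : ℤ, (2:ℝ)⁻¹ * (2:ℝ)^(-n) = (2:ℝ)^(-(n+1)) := by
    intro n
    rw [show (2:ℝ)⁻¹ = (2:ℝ)^(-1:ℤ) from by norm_num,
      ← zpow_add₀ (two_ne_zero : (2:ℝ) ≠ 0)]
    congr 1
    ring
  have hpo : IsPseudoOrbit (Fh : (ℝ×ℝ) ≃ₜ (ℝ×ℝ)) δ x := by
    intro n
    rcases lt_trichotomy n 0 with hn | hn | hn
    · have h1 : ¬ (0 < n) := by omega
      have h2 : ¬ (0 < n + 1) := by omega
      have : Fh (x n) = x (n + 1) := by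
        rw [hx]; simp only [h1, h2, if_neg, if_false]
        rw [Fh_apply]
        simp only [Prod.mk.injEq]
        exact ⟨by norm_num, hsnd n⟩
      rw [this]
      simpa using hδpos (x (n+1))
    · subst hn
      have hfx : Fh (x 0) = (0, 2⁻¹) := by
        rw [hx, Fh_apply]; norm_num
      have hx1 : x 1 = (c, 2⁻¹) := by
        rw [hx]; norm_num
      rw [show (0:ℤ)+1 = 1 by ring, hfx, hx1, Prod.dist_eq]
      simp only [dist_self]
      rw [Real.dist_eq, abs_of_nonpos (by linarith), max_eq_left (by linarith)]
      simpa using hcδ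
    · have h1 : (0 < n) := hn
      have h2 : (0 < n + 1) := by omega
      have : Fh (x n) = x (n + 1) := by
        rw [hx]; simp only [h1, h2, if_pos, if_true]
        rw [Fh_apply]
        have hfst : (2:ℝ) * ((2:ℝ)^(n-1) * c) = (2:ℝ)^(n+1-1) * c := by
          rw [show n+1-1 = 1 + (n-1) by ring, zpow_add₀ (two_ne_zero : (2:ℝ) ≠ 0), zpow_one]
          ring
        simp only [Prod.mk.injEq]
        exact ⟨hfst, hsnd n⟩
      rw [this]
      simpa using hδpos (x (n+1))
  obtain ⟨y, hy⟩ := hsh x hpo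
  -- Step 1 : y.1 = 0
  have hy1 : y.1 = 0 := by
    have key : ∀ m : ℕ, |y.1| ≤ ((1:ℝ)/2)^m := by
      intro m
      set T : ℝ := (2:ℝ)^(m+1) with hT
      have hT0 : (0:ℝ) < T := by rw [hT]; positivity
      have hT1 : (1:ℝ) ≤ T := one_le_pow₀ (by norm_num)
      have hTm : (2:ℝ)^m ≤ T := by
        rw [hT, pow_succ]
        nlinarith [pow_pos (show (0:ℝ) < 2 by norm_num) m]
      have h := hy (Int.negSucc m)
      have hxn : x (Int.negSucc m) = (0, T) := by
        rw [hx]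
        have hneg := Int.negSucc_lt_zero m
        have h1 : ¬ (0 < Int.negSucc m) := by omega
        have h2 : -(Int.negSucc m) = ((m+1 : ℕ) : ℤ) := by
          rw [Int.negSucc_eq]; push_cast; ring
        simp only [h1, if_neg, if_false, h2, zpow_natCast, hT]
      rw [hxn, hzpow_Fh_negSucc] at h
      have hfst : dist (T⁻¹ * y.1) (0:ℝ) < ε (0, T) := by
        calc dist (T⁻¹ * y.1) (0:ℝ)
            ≤ dist ((T⁻¹ * y.1, T * y.2)) ((0:ℝ), T) := by
              rw [Prod.dist_eq]; exact le_max_left _ _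
          _ < _ := h
      rw [dist_zero_right, Real.norm_eq_abs, abs_mul,
        abs_of_pos (show (0:ℝ) < T⁻¹ by positivity)] at hfst
      have hεT : ε (0, T) = (1 + T^4)⁻¹ := rfl
      rw [hεT, inv_mul_lt_iff₀ hT0, ← div_eq_mul_inv] at hfst
      apply le_of_lt
      calc |y.1| < T / (1 + T^4) := hfst
        _ ≤ 1 / 2^m := by
            rw [div_le_div_iff₀ (by positivity) (by positivity)]
            nlinarith [mul_nonneg (mul_nonneg (sub_nonneg.mpr hT1)
              (show (0:ℝ) ≤ T + 1 by linarith)) (sq_nonneg T)]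
        _ = ((1:ℝ)/2)^m := by rw [div_pow, one_pow]
    have h0 : |y.1| ≤ 0 := by
      have htend : Tendsto (fun m : ℕ => ((1:ℝ)/2)^m) atTop (𝓝 0) :=
        tendsto_pow_atTop_nhds_zero_of_lt_one (by norm_num) (by norm_num)
      exact ge_of_tendsto' htend key
    exact abs_nonpos_iff.mp h0
  -- Step 2 : contradiction
  obtain ⟨k, hk⟩ := pow_unbounded_of_one_lt (1/c : ℝ) (show (1:ℝ) < 2 by norm_num)
  have h := hy ((k+1 : ℕ) : ℤ)
  have hxn : x ((k+1 : ℕ) : ℤ) = ((2:ℝ)^k * c, (2:ℝ)^(-((k+1:ℕ) : ℤ))) := by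
    rw [hx]
    have h1 : (0:ℤ) < ((k+1:ℕ) : ℤ) := by positivity
    simp only [h1, if_pos, if_true]
    congr 2
    rw [show ((k+1:ℕ) : ℤ) - 1 = (k : ℤ) by omega, zpow_natCast]
  rw [hzpow_Fh_ofNat, hy1, mul_zero, hxn] at h
  have hfst : dist (0:ℝ) ((2:ℝ)^k * c) < ε ((2:ℝ)^k * c, (2:ℝ)^(-((k+1:ℕ) : ℤ))) := by
    calc dist (0:ℝ) ((2:ℝ)^k * c)
        ≤ dist (((0:ℝ), ((2:ℝ)⁻¹)^(k+1) * y.2)) (((2:ℝ)^k * c, (2:ℝ)^(-((k+1:ℕ) : ℤ)))) := by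
          rw [Prod.dist_eq]; exact le_max_left _ _
      _ < _ := h
  have hε1 : ε ((2:ℝ)^k * c, (2:ℝ)^(-((k+1:ℕ) : ℤ))) ≤ 1 := hεle1 _
  rw [dist_comm, dist_zero_right, Real.norm_eq_abs, abs_of_pos (by positivity)] at hfst
  have hcontra : (1:ℝ) < (2:ℝ)^k * c := by
    rw [div_lt_iff₀ hc0] at hk
    linarith
  linarith [lt_of_lt_of_le hfst hε1]
end

section
/- If a linear isomorphism f : ℝ^d → ℝ^d has real eigenvalues λ > 1 and 0 < μ < 1, then f does not have the topological shadowing property. -/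
open Metric Filter Topology

/-!
Glue the backward orbit of `r • w` on the contracting eigenline to the forward orbit of `r • v`
on the expanding one; for small `r` the single jump `r • w ↦ r • v` is below `δ`. Take
`ε p = (1 + ‖p‖)⁻ᵏ` with `‖f‖ μᵏ < 1`. Since `f⁻ᵐ (r • w)` has norm `≍ μ⁻ᵐ`, a shadowing point
`y` satisfies `‖f⁻ᵐ y - f⁻ᵐ (r • w)‖ ≲ μᵐᵏ`, and applying the `‖f‖ᵐ`-Lipschitz map `fᵐ` gives
`‖y - r • w‖ ≲ (‖f‖ μᵏ)ᵐ → 0`, so `y = r • w`. Then the forward orbit of `y` stays bounded while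
the pseudo-orbit grows like `λⁿ`, although `ε ≤ 1`.
-/

theorem Homeomorph.coe_pow {X : Type*} [TopologicalSpace X] (f : X ≃ₜ X) (n : ℕ) :
    ⇑(f ^ n) = f^[n] :=
  hom_coe_pow _ rfl (fun _ _ => rfl) _ _

theorem hpow_eq_pow {X : Type*} [TopologicalSpace X] (f : X ≃ₜ X) (n : ℕ) :
    hpow f n = f ^ n := by
  induction n with
  | zero => rfl
  | succ n ih => rw [pow_succ', ← ih]; rfl

theorem hzpow_eq_zpow {X : Type*} [TopologicalSpace X] (f : X ≃ₜ X) (n : ℤ) :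
    hzpow f n = f ^ n := by
  cases n with
  | ofNat n => exact (hpow_eq_pow f n).trans (zpow_natCast f n).symm
  | negSucc n => rw [zpow_negSucc, ← hpow_eq_pow]; rfl

theorem ContinuousLinearEquiv.zpow_toHomeomorph_smul_of_apply_eq_smul {𝕜 E : Type*} [Field 𝕜]
    [AddCommGroup E] [Module 𝕜 E] [TopologicalSpace E] (e : E ≃L[𝕜] E) {μ : 𝕜} (hμ : μ ≠ 0)
    {w : E} (hw : e w = μ • w) (n : ℤ) (c : 𝕜) :
    (e.toHomeomorph ^ n) (c • w) = (μ ^ n * c) • w := by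
  induction n using Int.induction_on generalizing c with
  | zero => simp
  | succ n ih =>
    rw [zpow_add_one, Homeomorph.mul_apply, coe_toHomeomorph, map_smul, hw, smul_smul, ih,
      zpow_add_one₀ hμ, mul_right_comm, mul_assoc]
  | pred n ih =>
    have hsymm : e.symm (c • w) = (μ⁻¹ * c) • w := by
      rw [e.symm_apply_eq, map_smul, hw, smul_smul, mul_right_comm, inv_mul_cancel₀ hμ, one_mul]
    rw [zpow_sub_one, Homeomorph.mul_apply, Homeomorph.inv_apply, coe_symm_toHomeomorph,
      hsymm, ih, zpow_sub_one₀ hμ, mul_assoc]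

section MetricSpace

variable {X : Type*} [MetricSpace X]

def gluedOrbit (f : X ≃ₜ X) (p q : X) : ℤ → X := fun n => (f ^ n) (if 0 ≤ n then q else p)

theorem isPseudoOrbit_gluedOrbit {f : X ≃ₜ X} {δ : X → ℝ} (hδ : ∀ z, 0 < δ z) {p q : X}
    (hpq : dist p q < δ p) : IsPseudoOrbit f δ (gluedOrbit f p q) := by
  intro n
  have hstep : ∀ z, f ((f ^ n) z) = (f ^ (n + 1)) z := fun z => by
    rw [add_comm, zpow_one_add, Homeomorph.mul_apply]
  unfold gluedOrbit
  rw [hstep]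
  rcases lt_trichotomy n (-1) with hn | rfl | hn
  · rw [if_neg (by omega), if_neg (by omega), dist_self]
    exact hδ _
  · simpa using hpq
  · rw [if_pos (by omega), if_pos (by omega), dist_self]
    exact hδ _

theorem eq_of_tendsto_pow_mul_dist_zpow_neg {f : X ≃ₜ X} {K : NNReal} (hf : LipschitzWith K f)
    {y p : X}
    (h : Tendsto (fun m : ℕ => K ^ m * dist ((f ^ (-m : ℤ)) y) ((f ^ (-m : ℤ)) p)) atTop (𝓝 0)) :
    y = p := by
  have hle : ∀ m : ℕ, dist y p ≤ K ^ m * dist ((f ^ (-m : ℤ)) y) ((f ^ (-m : ℤ)) p) := by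
    intro m
    have hinv : ∀ z, f^[m] ((f ^ (-m : ℤ)) z) = z := fun z => by
      rw [← Homeomorph.coe_pow, ← Homeomorph.mul_apply, zpow_neg, zpow_natCast, mul_inv_cancel,
        Homeomorph.one_apply]
    have := (hf.iterate m).dist_le_mul ((f ^ (-m : ℤ)) y) ((f ^ (-m : ℤ)) p)
    rwa [hinv, hinv, NNReal.coe_pow] at this
  exact dist_le_zero.1 (ge_of_tendsto' h hle)

end MetricSpace

section NormedSpace

variable {E : Type*} [NormedAddCommGroup E]

noncomputable def polyDecay (k : ℕ) (p : E) : ℝ := ((1 + ‖p‖) ^ k)⁻¹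

theorem continuous_polyDecay (k : ℕ) : Continuous (polyDecay k : E → ℝ) :=
  ((continuous_const.add continuous_norm).pow k).inv₀ fun p =>
    pow_ne_zero k (add_pos_of_pos_of_nonneg one_pos (norm_nonneg p)).ne'

theorem polyDecay_pos (k : ℕ) (p : E) : 0 < polyDecay k p := by
  unfold polyDecay; positivity

theorem polyDecay_le_one (k : ℕ) (p : E) : polyDecay k p ≤ 1 :=
  inv_le_one_of_one_le₀ (one_le_pow₀ (le_add_of_nonneg_right (norm_nonneg p)))

theorem polyDecay_le_inv_norm_pow (k : ℕ) {p : E} (hp : p ≠ 0) :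
    polyDecay k p ≤ (‖p‖ ^ k)⁻¹ :=
  inv_anti₀ (by positivity) (pow_le_pow_left₀ (norm_nonneg p) (le_add_of_nonneg_left zero_le_one) k)

variable [NormedSpace ℝ E]

theorem exists_pos_dist_smul_lt {δ : E → ℝ} (hδ : ContinuousAt δ 0) (hδ0 : 0 < δ 0) (v w : E) :
    ∃ r : ℝ, 0 < r ∧ dist (r • w) (r • v) < δ (r • w) := by
  have hsmul : ∀ u : E, Tendsto (fun r : ℝ => r • u) (𝓝[>] 0) (𝓝 0) := fun u =>
    tendsto_nhdsWithin_of_tendsto_nhds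
      ((continuous_id.smul continuous_const).tendsto' 0 0 (zero_smul ℝ u))
  have hdist : Tendsto (fun r : ℝ => dist (r • w) (r • v)) (𝓝[>] 0) (𝓝 0) := by
    simpa only [dist_self] using (hsmul w).dist (hsmul v)
  obtain ⟨r, hr, hr0⟩ :=
    ((hdist.eventually_lt (hδ.tendsto.comp (hsmul w)) hδ0).and self_mem_nhdsWithin).exists
  exact ⟨r, hr0, hr⟩

theorem eq_smul_of_dist_zpow_neg_lt_polyDecay (e : E ≃L[ℝ] E) {mu : ℝ} (hmu : mu ≠ 0) {w : E}
    (hw : e w = mu • w) (hw0 : w ≠ 0) {k : ℕ} (hk : ‖(e : E →L[ℝ] E)‖ * ‖mu‖ ^ k < 1)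
    {c : ℝ} (hc : c ≠ 0) {y : E}
    (hy : ∀ m : ℕ, 0 < m → dist ((e.toHomeomorph ^ (-m : ℤ)) y)
      ((e.toHomeomorph ^ (-m : ℤ)) (c • w)) < polyDecay k ((e.toHomeomorph ^ (-m : ℤ)) (c • w))) :
    y = c • w := by
  set K := ‖(e : E →L[ℝ] E)‖₊
  have hlip : LipschitzWith K e.toHomeomorph := (e : E →L[ℝ] E).lipschitz
  have hlim : Tendsto (fun m : ℕ => (K * ‖mu‖ ^ k) ^ m * ((‖c‖ * ‖w‖) ^ k)⁻¹) atTop (𝓝 0) := by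
    simpa [K] using (tendsto_pow_atTop_nhds_zero_of_lt_one (by positivity) hk).mul_const
      ((‖c‖ * ‖w‖) ^ k)⁻¹
  refine eq_of_tendsto_pow_mul_dist_zpow_neg hlip
    (squeeze_zero' (.of_forall fun m => by positivity)
      ((eventually_gt_atTop 0).mono fun m hm => ?_) hlim)
  have hpt : (e.toHomeomorph ^ (-m : ℤ)) (c • w) = (mu ^ (-m : ℤ) * c) • w :=
    e.zpow_toHomeomorph_smul_of_apply_eq_smul hmu hw (-m) c
  have hnorm : ‖(mu ^ (-m : ℤ) * c) • w‖ = (‖mu‖ ^ m)⁻¹ * (‖c‖ * ‖w‖) := by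
    rw [norm_smul, norm_mul, norm_zpow, zpow_neg, zpow_natCast, mul_assoc]
  calc (K : ℝ) ^ m * dist ((e.toHomeomorph ^ (-m : ℤ)) y) ((e.toHomeomorph ^ (-m : ℤ)) (c • w))
      ≤ (K : ℝ) ^ m * (‖(mu ^ (-m : ℤ) * c) • w‖ ^ k)⁻¹ := by
        rw [← hpt]
        gcongr
        refine (hy m hm).le.trans (polyDecay_le_inv_norm_pow k ?_)
        rw [hpt]
        exact smul_ne_zero (mul_ne_zero (zpow_ne_zero _ hmu) hc) hw0
    _ = (K * ‖mu‖ ^ k) ^ m * ((‖c‖ * ‖w‖) ^ k)⁻¹ := by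
        rw [hnorm, mul_pow, inv_pow, mul_inv, inv_inv, coe_nnnorm]
        ring

theorem tendsto_dist_zpow_natCast_smul_atTop (e : E ≃L[ℝ] E) {lam mu : ℝ} (hlam : 1 < ‖lam‖)
    (hmu0 : mu ≠ 0) (hmu1 : ‖mu‖ ≤ 1) {v w : E} (hv : e v = lam • v) (hv0 : v ≠ 0)
    (hw : e w = mu • w) {c : ℝ} (hc : c ≠ 0) :
    Tendsto (fun n : ℕ => dist ((e.toHomeomorph ^ (n : ℤ)) (c • w))
      ((e.toHomeomorph ^ (n : ℤ)) (c • v))) atTop atTop := by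
  have hlam0 : lam ≠ 0 := norm_pos_iff.1 (one_pos.trans hlam)
  refine tendsto_atTop_mono (fun n => ?_) (tendsto_atTop_add_const_right _ (-(‖c‖ * ‖w‖))
    ((tendsto_pow_atTop_atTop_of_one_lt hlam).atTop_mul_const (by positivity :
      0 < ‖c‖ * ‖v‖)))
  rw [e.zpow_toHomeomorph_smul_of_apply_eq_smul hlam0 hv,
    e.zpow_toHomeomorph_smul_of_apply_eq_smul hmu0 hw, dist_comm]
  have hw_le : ‖(mu ^ (n : ℤ) * c) • w‖ ≤ ‖c‖ * ‖w‖ := by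
    rw [norm_smul, norm_mul, norm_zpow, zpow_natCast, mul_assoc]
    exact mul_le_of_le_one_left (by positivity) (pow_le_one₀ (norm_nonneg _) hmu1)
  have hv_eq : ‖(lam ^ (n : ℤ) * c) • v‖ = ‖lam‖ ^ n * (‖c‖ * ‖v‖) := by
    rw [norm_smul, norm_mul, norm_zpow, zpow_natCast, mul_assoc]
  linarith [norm_sub_norm_le ((lam ^ (n : ℤ) * c) • v) ((mu ^ (n : ℤ) * c) • w),
    dist_eq_norm ((lam ^ (n : ℤ) * c) • v) ((mu ^ (n : ℤ) * c) • w)]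

theorem not_TSP_of_apply_eq_smul (e : E ≃L[ℝ] E) {lam mu : ℝ} (hlam : 1 < ‖lam‖) (hmu0 : mu ≠ 0)
    (hmu1 : ‖mu‖ < 1) {v w : E} (hv : e v = lam • v) (hv0 : v ≠ 0) (hw : e w = mu • w)
    (hw0 : w ≠ 0) : ¬ TSP e.toHomeomorph := by
  intro hTSP
  obtain ⟨k, hk⟩ : ∃ k : ℕ, ‖(e : E →L[ℝ] E)‖ * ‖mu‖ ^ k < 1 :=
    (((tendsto_pow_atTop_nhds_zero_of_lt_one (norm_nonneg _) hmu1).const_mul _).eventually_lt_const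
      (by simp)).exists
  obtain ⟨δ, hδc, hδ0, hshadow⟩ := hTSP (polyDecay k) (continuous_polyDecay k) (polyDecay_pos k)
  obtain ⟨r, hr0, hr⟩ := exists_pos_dist_smul_lt hδc.continuousAt (hδ0 0) v w
  obtain ⟨y, hy⟩ := hshadow _ (isPseudoOrbit_gluedOrbit hδ0 hr)
  simp only [hzpow_eq_zpow, gluedOrbit] at hy
  have hyw : y = r • w := eq_smul_of_dist_zpow_neg_lt_polyDecay e hmu0 hw hw0 hk hr0.ne'
    fun m hm => by simpa only [if_neg (show ¬ (0 : ℤ) ≤ -m by omega)] using hy (-m)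
  obtain ⟨N, hN⟩ := ((tendsto_dist_zpow_natCast_smul_atTop e hlam hmu0 hmu1.le hv hv0 hw
    hr0.ne').eventually_ge_atTop 1).exists
  have hyN := hy N
  rw [if_pos (Int.natCast_nonneg N), hyw] at hyN
  exact (hN.trans_lt hyN).not_ge (polyDecay_le_one k _)

end NormedSpace

/-- A linear isomorphism of `ℝ^d` with a real eigenvalue `λ > 1` and a real eigenvalue
`0 < μ < 1` does not have the topological shadowing property. -/
theorem linear_iso_mixed_eigenvalues_not_TSP (d : ℕ)
    (f : EuclideanSpace ℝ (Fin d) ≃ₗ[ℝ] EuclideanSpace ℝ (Fin d)) (lam mu : ℝ)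
    (hlam : Module.End.HasEigenvalue (f : EuclideanSpace ℝ (Fin d) →ₗ[ℝ] EuclideanSpace ℝ (Fin d)) lam)
    (hmu : Module.End.HasEigenvalue (f : EuclideanSpace ℝ (Fin d) →ₗ[ℝ] EuclideanSpace ℝ (Fin d)) mu)
    (hlam1 : 1 < lam) (hmu0 : 0 < mu) (hmu1 : mu < 1) :
    ¬ TSP f.toContinuousLinearEquiv.toHomeomorph := by
  obtain ⟨v, hv⟩ := hlam.exists_hasEigenvector
  obtain ⟨w, hw⟩ := hmu.exists_hasEigenvector
  exact not_TSP_of_apply_eq_smul f.toContinuousLinearEquiv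
    (by rwa [Real.norm_of_nonneg (by linarith)]) hmu0.ne' (by rwa [Real.norm_of_nonneg hmu0.le])
    hv.apply_eq_smul hv.2 hw.apply_eq_smul hw.2
end

section
/- The homothety f(x) = 2x on ℝ^d has the forward topological shadowing property: for every continuous ε : ℝ^d → (0,∞) there exists a continuous δ : ℝ^d → (0,∞) such that every δ-pseudo-orbit (xₙ)ₙ∈ℤ satisfies: there exists y ∈ ℝ^d with ‖fⁿ(y) − xₙ‖ ≤ ε(xₙ) for all n ≥ 0. -/
/-!
Pulled back to time `0`, a pseudo-orbit `wₖ = 2⁻ᵏ xₖ` moves by less than `2⁻⁽ᵏ⁺¹⁾ δ(2xₖ)`, so it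
converges to some `y`, and `2ⁿ y` is the limit of the pull-back `2⁻ᵐ xₙ₊ₘ` of the shifted
pseudo-orbit. Since `δ` is evaluated only at the unknown points `2xₙ₊ₘ`, take `δ = H / 2` for a
positive `1`-Lipschitz minorant `H` of `ε` that does not decrease along segments towards the
origin. Then the pull-back starting at `xₙ` moves by at most `2⁻⁽ᵐ⁺²⁾ H(wₘ)` at step `m`, and as
long as it stays within `H(xₙ)` of `xₙ` the Lipschitz bound gives `H(wₘ) ≤ 2 H(xₙ)`; an induction
on `m` keeps it there.
-/
open Metric Filter Topology

open Set

section Minorant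

variable {X : Type*} [PseudoMetricSpace X]

theorem exists_lipschitzWith_one_pos_le {ε : X → ℝ} (hε : Continuous ε) (hpos : ∀ x, 0 < ε x) :
    ∃ G : X → ℝ, LipschitzWith 1 G ∧ (∀ x, 0 < G x) ∧ ∀ x, G x ≤ ε x := by
  have hbdd : ∀ x, BddBelow (range fun z => ε z + dist x z) := fun x =>
    ⟨0, by rintro _ ⟨z, rfl⟩; exact add_nonneg (hpos z).le dist_nonneg⟩
  refine ⟨fun x => ⨅ z, ε z + dist x z, LipschitzWith.of_le_add fun x y => ?_, fun x => ?_,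
    fun x => by simpa using ciInf_le (hbdd x) x⟩ <;> have : Nonempty X := ⟨x⟩
  · rw [← sub_le_iff_le_add]
    refine le_ciInf fun z => ?_
    have := ciInf_le (hbdd x) z
    linarith [dist_triangle x y z]
  · obtain ⟨r, hr, hball⟩ := Metric.eventually_nhds_iff.mp
      ((hε.tendsto x).eventually (lt_mem_nhds (half_lt_self (hpos x))))
    refine (lt_min (half_pos (hpos x)) hr).trans_le (le_ciInf fun z => ?_)
    rcases lt_or_ge (dist z x) r with h | h
    · linarith [min_le_left (ε x / 2) r, hball h, dist_nonneg (x := x) (y := z)]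
    · linarith [min_le_right (ε x / 2) r, hpos z, dist_comm x z]

end Minorant

section Radial

variable {E : Type*} [SeminormedAddCommGroup E] [NormedSpace ℝ E]

noncomputable def radialInf (G : E → ℝ) (p : E) : ℝ :=
  ⨅ t : Icc (0 : ℝ) 1, G ((t : ℝ) • p)

def AntitoneAlongRays (H : E → ℝ) : Prop :=
  ∀ p, ∀ t ∈ Icc (0 : ℝ) 1, H p ≤ H (t • p)

variable {G : E → ℝ}

theorem radialInf_le (hG : ∀ p, 0 ≤ G p) (p : E) {t : ℝ} (ht : t ∈ Icc (0 : ℝ) 1) :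
    radialInf G p ≤ G (t • p) :=
  ciInf_le ⟨0, by rintro _ ⟨s, rfl⟩; exact hG _⟩ (⟨t, ht⟩ : Icc (0 : ℝ) 1)

theorem antitoneAlongRays_radialInf (hG : ∀ p, 0 ≤ G p) : AntitoneAlongRays (radialInf G) :=
  fun p _ ht => le_ciInf fun s => by
    rw [smul_smul]
    exact radialInf_le hG p (unitInterval.mul_mem s.2 ht)

theorem lipschitzWith_radialInf (hG : LipschitzWith 1 G) (hG₀ : ∀ p, 0 ≤ G p) :
    LipschitzWith 1 (radialInf G) := by
  refine LipschitzWith.of_le_add fun p q => ?_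
  rw [← sub_le_iff_le_add]
  refine le_ciInf fun t => ?_
  have hdist : dist ((t : ℝ) • p) ((t : ℝ) • q) ≤ dist p q := by
    rw [dist_smul₀, Real.norm_of_nonneg t.2.1]
    exact mul_le_of_le_one_left dist_nonneg t.2.2
  have := hG.le_add_mul ((t : ℝ) • p) ((t : ℝ) • q)
  have := radialInf_le hG₀ p t.2
  push_cast at *
  linarith

theorem radialInf_pos (hG : Continuous G) (hpos : ∀ p, 0 < G p) (p : E) : 0 < radialInf G p := by
  obtain ⟨t₀, ht₀, hmin⟩ := isCompact_Icc.exists_isMinOn (nonempty_Icc.mpr zero_le_one)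
    (hG.comp (continuous_id.smul continuous_const) : Continuous fun t : ℝ => G (t • p)).continuousOn
  exact (hpos (t₀ • p)).trans_le (le_ciInf fun t => hmin t.2)

theorem exists_lipschitzWith_one_pos_antitoneAlongRays_le {ε : E → ℝ} (hε : Continuous ε)
    (hpos : ∀ p, 0 < ε p) :
    ∃ H : E → ℝ, LipschitzWith 1 H ∧ (∀ p, 0 < H p) ∧ AntitoneAlongRays H ∧ ∀ p, H p ≤ ε p := by
  obtain ⟨G, hGlip, hGpos, hGle⟩ := exists_lipschitzWith_one_pos_le hε hpos
  have hG : ∀ p, 0 ≤ G p := fun p => (hGpos p).le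
  refine ⟨radialInf G, lipschitzWith_radialInf hGlip hG, radialInf_pos hGlip.continuous hGpos,
    antitoneAlongRays_radialInf hG, fun p => ?_⟩
  simpa using (radialInf_le hG p (right_mem_Icc.mpr zero_le_one)).trans (hGle (1 • p))

end Radial

section PullBack

variable {X : Type*} [PseudoMetricSpace X] {H : X → ℝ} {w : ℕ → X}

theorem dist_le_of_dist_succ_le (hH : LipschitzWith 1 H)
    (hw : ∀ m, dist (w m) (w (m + 1)) ≤ H (w m) / 2 ^ (m + 2)) (m : ℕ) :
    dist (w m) (w 0) ≤ (1 - 1 / 2 ^ m) * H (w 0) := by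
  have hH0 : 0 ≤ H (w 0) := by nlinarith [hw 0, dist_nonneg (x := w 0) (y := w 1)]
  induction m with
  | zero => simp
  | succ m ih =>
    have hHm : H (w m) ≤ 2 * H (w 0) := by
      have := hH.le_add_mul (w m) (w 0)
      push_cast at this
      nlinarith [one_div_pos.mpr (pow_pos (two_pos : (0 : ℝ) < 2) m)]
    calc dist (w (m + 1)) (w 0) ≤ dist (w m) (w (m + 1)) + dist (w m) (w 0) :=
          dist_triangle_left _ _ _
      _ ≤ 2 * H (w 0) / 2 ^ (m + 2) + (1 - 1 / 2 ^ m) * H (w 0) :=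
          add_le_add ((hw m).trans (by gcongr)) ih
      _ = (1 - 1 / 2 ^ (m + 1)) * H (w 0) := by field_simp; ring

theorem dist_succ_le_geometric (hH : LipschitzWith 1 H)
    (hw : ∀ m, dist (w m) (w (m + 1)) ≤ H (w m) / 2 ^ (m + 2)) (m : ℕ) :
    dist (w m) (w (m + 1)) ≤ H (w 0) / 2 / 2 ^ m := by
  have hHm : H (w m) ≤ 2 * H (w 0) := by
    have := hH.le_add_mul (w m) (w 0)
    push_cast at this
    nlinarith [dist_le_of_dist_succ_le hH hw m, one_div_pos.mpr (pow_pos (two_pos : (0 : ℝ) < 2) m),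
      hw 0, dist_nonneg (x := w 0) (y := w 1)]
  calc dist (w m) (w (m + 1)) ≤ 2 * H (w 0) / 2 ^ (m + 2) := (hw m).trans (by gcongr)
    _ = H (w 0) / 2 / 2 ^ m := by field_simp; ring

end PullBack

theorem coe_hzpow_natCast {X : Type*} [TopologicalSpace X] (f : X ≃ₜ X) (n : ℕ) :
    ⇑(hzpow f n) = (⇑f)^[n] := by
  change ⇑(hpow f n) = _
  induction n with
  | zero => rfl
  | succ n ih => rw [Function.iterate_succ', ← ih]; rfl

section Homothety

variable {E : Type*} [SeminormedAddCommGroup E] [NormedSpace ℝ E] {H : E → ℝ}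

theorem dist_inv_two_pow_smul_succ_le (hray : AntitoneAlongRays H) {u : ℕ → E}
    (hu : ∀ m, ‖(2 : ℝ) • u m - u (m + 1)‖ < H ((2 : ℝ) • u m) / 2) (m : ℕ) :
    dist (((2 : ℝ) ^ m)⁻¹ • u m) (((2 : ℝ) ^ (m + 1))⁻¹ • u (m + 1)) ≤
      H (((2 : ℝ) ^ m)⁻¹ • u m) / 2 ^ (m + 2) := by
  have hpull : ((2 : ℝ) ^ m)⁻¹ • u m = ((2 : ℝ) ^ (m + 1))⁻¹ • (2 : ℝ) • u m := by
    rw [smul_smul, pow_succ, mul_inv, mul_assoc, inv_mul_cancel₀ two_ne_zero, mul_one]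
  have ht : ((2 : ℝ) ^ (m + 1))⁻¹ ∈ Icc (0 : ℝ) 1 :=
    ⟨by positivity, inv_le_one_of_one_le₀ (one_le_pow₀ one_le_two)⟩
  rw [hpull, dist_smul₀, Real.norm_of_nonneg ht.1, dist_eq_norm]
  calc ((2 : ℝ) ^ (m + 1))⁻¹ * ‖(2 : ℝ) • u m - u (m + 1)‖
      ≤ ((2 : ℝ) ^ (m + 1))⁻¹ * (H ((2 : ℝ) • u m) / 2) := by gcongr; exact (hu m).le
    _ ≤ ((2 : ℝ) ^ (m + 1))⁻¹ * (H (((2 : ℝ) ^ (m + 1))⁻¹ • (2 : ℝ) • u m) / 2) := by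
        gcongr; exact hray _ _ ht
    _ = H (((2 : ℝ) ^ (m + 1))⁻¹ • (2 : ℝ) • u m) / 2 ^ (m + 2) := by ring

theorem exists_forall_norm_two_pow_smul_sub_le [CompleteSpace E] (hH : LipschitzWith 1 H)
    (hray : AntitoneAlongRays H) {x : ℕ → E}
    (hx : ∀ n, ‖(2 : ℝ) • x n - x (n + 1)‖ < H ((2 : ℝ) • x n) / 2) :
    ∃ y : E, ∀ n, ‖(2 : ℝ) ^ n • y - x n‖ ≤ H (x n) := by
  have hw : ∀ n m, dist (((2 : ℝ) ^ m)⁻¹ • x (n + m)) (((2 : ℝ) ^ (m + 1))⁻¹ • x (n + (m + 1)))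
      ≤ H (((2 : ℝ) ^ m)⁻¹ • x (n + m)) / 2 ^ (m + 2) := fun n =>
    dist_inv_two_pow_smul_succ_le hray fun m => hx (n + m)
  have hw₀ := hw 0
  simp only [zero_add] at hw₀
  obtain ⟨y, hy⟩ := cauchySeq_tendsto_of_complete
    (cauchySeq_of_le_geometric_two (dist_succ_le_geometric hH hw₀))
  refine ⟨y, fun n => ?_⟩
  have hyn : Tendsto (fun m => ((2 : ℝ) ^ m)⁻¹ • x (n + m)) atTop (𝓝 ((2 : ℝ) ^ n • y)) := by
    refine ((hy.comp (tendsto_add_atTop_nat n)).const_smul ((2 : ℝ) ^ n)).congr fun m => ?_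
    simp only [Function.comp_apply, smul_smul, add_comm m n, pow_add, mul_inv, ← mul_assoc,
      mul_inv_cancel₀ (pow_ne_zero n (two_ne_zero' ℝ)), one_mul]
  simpa [dist_eq_norm, norm_sub_rev] using
    dist_le_of_le_geometric_two_of_tendsto₀ (dist_succ_le_geometric hH (hw n)) hyn

end Homothety

/-- The homothety `x ↦ 2x` of `ℝ^d` has the forward topological shadowing property. -/
theorem homothety_forward_TSP (d : ℕ) :
    ∀ ε : EuclideanSpace ℝ (Fin d) → ℝ, Continuous ε → (∀ p, 0 < ε p) →
      ∃ δ : EuclideanSpace ℝ (Fin d) → ℝ, Continuous δ ∧ (∀ p, 0 < δ p) ∧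
        ∀ x : ℤ → EuclideanSpace ℝ (Fin d),
          (∀ n : ℤ, ‖(2 : ℝ) • x n - x (n + 1)‖ < δ ((2 : ℝ) • x n)) →
          ∃ y : EuclideanSpace ℝ (Fin d),
            ∀ n : ℕ, ‖(hzpow (Homeomorph.smulOfNeZero (2 : ℝ) two_ne_zero) n) y - x n‖ ≤ ε (x n) := by
  intro ε hε hεpos
  obtain ⟨H, hH, hHpos, hray, hHle⟩ := exists_lipschitzWith_one_pos_antitoneAlongRays_le hε hεpos
  refine ⟨fun p => H p / 2, hH.continuous.div_const 2, fun p => half_pos (hHpos p), fun x hx => ?_⟩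
  obtain ⟨y, hy⟩ := exists_forall_norm_two_pow_smul_sub_le hH hray (x := fun n : ℕ => x n)
    fun n => by simpa using hx n
  refine ⟨y, fun n => ?_⟩
  rw [coe_hzpow_natCast, Homeomorph.smulOfNeZero_apply, smul_iterate]
  exact (hy n).trans (hHle _)
end

section
/- In the sup-norm metric on ℝ², if f(x,y) = (2x, y/2) and a point (x̄, ȳ) satisfies max(2ⁿ|x̄ − x₀|, 2^{−n}|ȳ|) < 2^{−2ⁿ x₀} for all n > 0, where x₀ > 0, then (x̄, ȳ) = (x₀, 0). -/
/-!
Put `M = max |x̄ - x₀| |ȳ|`. Multiplying the `n`-th hypothesis by `2ⁿ` gives `M < 2ⁿ · 2^{-2ⁿ x₀}`,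
and `t · 2^{-t x₀} → 0` as `t = 2ⁿ → ∞` because the exponential decay beats linear growth.
Hence `M ≤ 0`.
-/

open Filter Topology

theorem tendsto_mul_rpow_neg_mul_atTop {b c : ℝ} (hb : 1 < b) (hc : 0 < c) :
    Tendsto (fun t : ℝ => t * b ^ (-(t * c))) atTop (𝓝 0) := by
  have hexp := tendsto_rpow_mul_exp_neg_mul_atTop_nhds_zero 1 (c * Real.log b)
    (mul_pos hc (Real.log_pos hb))
  refine hexp.congr fun t => ?_
  rw [Real.rpow_one, Real.rpow_def_of_pos (zero_lt_one.trans hb)]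
  ring_nf

theorem max_le_mul_max_mul_inv_mul {s a b : ℝ} (hs : 1 ≤ s) (ha : 0 ≤ a) :
    max a b ≤ s * max (s * a) (s⁻¹ * b) := by
  have hs₀ : 0 < s := zero_lt_one.trans_le hs
  refine max_le ?_ ?_
  · calc a ≤ s * s * a := le_mul_of_one_le_left ha (one_le_mul_of_one_le_of_one_le hs hs)
      _ = s * (s * a) := mul_assoc _ _ _
      _ ≤ s * max (s * a) (s⁻¹ * b) := by gcongr; exact le_max_left _ _
  · calc b = s * (s⁻¹ * b) := by field_simp
      _ ≤ s * max (s * a) (s⁻¹ * b) := by gcongr; exact le_max_right _ _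

/-- Key uniqueness step for `f(x,y) = (2x, y/2)` with tolerance `ε(p) = 2^{-‖p‖}`:
if `max(2ⁿ|x̄ − x₀|, 2^{-n}|ȳ|) < 2^{-2ⁿx₀}` for all `n > 0` and `x₀ > 0`,
then `(x̄, ȳ) = (x₀, 0)`. -/
theorem shadowing_orbit_unique (x₀ xb yb : ℝ) (hx₀ : 0 < x₀)
    (h : ∀ n : ℕ, 0 < n →
      max ((2 : ℝ) ^ n * |xb - x₀|) ((2 : ℝ) ^ (-(n : ℤ)) * |yb|) <
        (2 : ℝ) ^ (-((2 : ℝ) ^ n * x₀))) :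
    xb = x₀ ∧ yb = 0 := by
  have hbound : ∀ n : ℕ, 0 < n →
      max |xb - x₀| |yb| < (2 : ℝ) ^ n * (2 : ℝ) ^ (-((2 : ℝ) ^ n * x₀)) := fun n hn => by
    have hn := h n hn
    rw [zpow_neg, zpow_natCast] at hn
    exact (max_le_mul_max_mul_inv_mul (one_le_pow₀ one_le_two) (abs_nonneg _)).trans_lt
      (mul_lt_mul_of_pos_left hn (by positivity))
  have hlim : Tendsto (fun n : ℕ => (2 : ℝ) ^ n * (2 : ℝ) ^ (-((2 : ℝ) ^ n * x₀))) atTop (𝓝 0) :=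
    (tendsto_mul_rpow_neg_mul_atTop one_lt_two hx₀).comp
      (tendsto_pow_atTop_atTop_of_one_lt one_lt_two)
  have hM : max |xb - x₀| |yb| ≤ 0 :=
    ge_of_tendsto hlim (eventually_atTop.2 ⟨1, fun n hn => (hbound n hn).le⟩)
  obtain ⟨hx, hy⟩ := max_le_iff.1 hM
  exact ⟨sub_eq_zero.1 (abs_nonpos_iff.1 hx), abs_nonpos_iff.1 hy⟩
end

section
/- Let X be a metric space and E an open neighborhood of the diagonal Δ_X in X × X such that E[x] := {y : (x,y) ∈ E} is a proper subset of X for every x. Then there exists a continuous function ε : X → (0,∞) such that {(x,y) : d(x,y) < ε(x)} ⊆ E. -/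
/-- For an open neighborhood `E` of the diagonal of a metric space `X` with every section
`E[x] = {y : (x,y) ∈ E}` a proper subset of `X`, there is a continuous strictly positive
`ε : X → (0,∞)` with `{(x,y) : d(x,y) < ε(x)} ⊆ E`. -/
theorem exists_continuous_eps_of_diagonal_nbhd {X : Type*} [MetricSpace X]
    (E : Set (X × X)) (hEopen : IsOpen E) (hdiag : Set.diagonal X ⊆ E)
    (hproper : ∀ x : X, {y : X | (x, y) ∈ E} ≠ Set.univ) :
    ∃ ε : X → ℝ, Continuous ε ∧ (∀ x, 0 < ε x) ∧
      ∀ x y : X, dist x y < ε x → (x, y) ∈ E := by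
  set h : X → ℝ := fun z => Metric.infDist z {y : X | (z, y) ∈ E}ᶜ with hh
  have hcompl : ∀ z : X, ({y : X | (z, y) ∈ E}ᶜ : Set X).Nonempty := by
    intro z
    rw [Set.nonempty_compl]
    exact hproper z
  have hnn : ∀ z, 0 ≤ h z := fun z => Metric.infDist_nonneg
  set ε : X → ℝ := fun x => ⨅ z : X, (h z + dist x z) with hε
  have hbdd : ∀ x : X, BddBelow (Set.range fun z => h z + dist x z) := by
    intro x
    refine ⟨0, ?_⟩
    rintro r ⟨z, rfl⟩
    exact add_nonneg (hnn z) dist_nonneg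
  have hle : ∀ x z : X, ε x ≤ h z + dist x z := fun x z => ciInf_le (hbdd x) z
  have key : ∀ a b : X, ε a ≤ ε b + dist a b := by
    intro a b
    haveI : Nonempty X := ⟨a⟩
    rw [← sub_le_iff_le_add]
    have h2 : ε a - dist a b ≤ ⨅ z : X, (h z + dist b z) := by
      refine le_ciInf fun z => ?_
      have h1 := hle a z
      have htri : dist a z ≤ dist a b + dist b z := dist_triangle a b z
      linarith
    exact h2
  have hlip : LipschitzWith 1 ε := by
    apply LipschitzWith.of_dist_le_mul
    intro x y
    simp only [NNReal.coe_one, one_mul]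
    rw [Real.dist_eq, abs_sub_le_iff]
    have k1 := key x y
    have k2 := key y x
    rw [dist_comm y x] at k2
    constructor <;> linarith
  refine ⟨ε, hlip.continuous, ?_, ?_⟩
  · intro x
    haveI : Nonempty X := ⟨x⟩
    have hxx : (x, x) ∈ E := hdiag rfl
    obtain ⟨r, hr, hball⟩ := Metric.isOpen_iff.mp hEopen (x, x) hxx
    have key : ∀ z, r / 2 ≤ h z + dist x z := by
      intro z
      by_cases hz : r / 2 ≤ dist x z
      · linarith [hnn z]
      · push_neg at hz
        have : r / 2 ≤ h z := by
          rw [hh, ← not_lt, Metric.infDist_lt_iff (hcompl z)]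
          rintro ⟨w, hw, hlt⟩
          apply hw
          apply hball
          rw [Metric.mem_ball, Prod.dist_eq]
          simp only [max_lt_iff]
          constructor
          · rw [dist_comm]; linarith
          · calc dist w x ≤ dist w z + dist z x := dist_triangle w z x
              _ < r / 2 + r / 2 := by
                  rw [dist_comm w z, dist_comm z x]; exact add_lt_add hlt hz
              _ = r := by ring
        linarith [dist_nonneg (x := x) (y := z)]
    have : r / 2 ≤ ε x := le_ciInf key
    linarith
  · intro x y hxy
    have h1 : ε x ≤ h x := by
      have := hle x x
      simpa using this
    have h2 : dist x y < h x := lt_of_lt_of_le hxy h1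
    by_contra hne
    have : h x ≤ dist x y := Metric.infDist_le_dist_of_mem hne
    linarith
end

section
/- For a locally compact metric space X and a homeomorphism f : X → X, the following are equivalent: (1) for every continuous ε : X → (0,∞) there is a continuous δ : X → (0,∞) such that every sequence (xₙ)ₙ∈ℤ with d(f(xₙ), xₙ₊₁) < δ(f(xₙ)) for all n admits y with d(fⁿ(y), xₙ) < ε(xₙ) for all n; (2) for every neighborhood E of the diagonal Δ_X there is a neighborhood D of Δ_X such that every sequence (xₙ)ₙ∈ℤ with (f(xₙ), xₙ₊₁) ∈ D for all n admits y with (fⁿ(y), xₙ) ∈ E for all n. -/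
open Metric Filter Topology

/-- Topological shadowing property, phrased with neighborhoods of the diagonal. -/
def TSPTop {X : Type*} [TopologicalSpace X] (f : X ≃ₜ X) : Prop :=
  ∀ E : Set (X × X), E ∈ nhdsSet (Set.diagonal X) →
    ∃ D ∈ nhdsSet (Set.diagonal X),
      ∀ x : ℤ → X, (∀ n : ℤ, (f (x n), x (n + 1)) ∈ D) →
        ∃ y : X, ∀ n : ℤ, (hzpow f n y, x n) ∈ E

/-- From a neighborhood of the diagonal one can extract a continuous positive "radius"
function working for both coordinate conventions. -/
lemma exists_cont_eps {X : Type*} [MetricSpace X] {E : Set (X × X)}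
    (hE : E ∈ nhdsSet (Set.diagonal X)) :
    ∃ ε : X → ℝ, Continuous ε ∧ (∀ p, 0 < ε p) ∧
      (∀ p q : X, dist p q < ε p → (p, q) ∈ E) ∧
      (∀ p q : X, dist p q < ε q → (p, q) ∈ E) := by
  set U := interior E with hUdef
  have hdiag : Set.diagonal X ⊆ U := subset_interior_iff_mem_nhdsSet.mpr hE
  have hUopen : IsOpen U := isOpen_interior
  have hUE : U ⊆ E := interior_subset
  by_cases hne : Uᶜ.Nonempty
  · refine ⟨fun p => min 1 (infDist ((p, p) : X × X) Uᶜ), ?_, ?_, ?_, ?_⟩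
    · exact continuous_const.min
        ((continuous_infDist_pt _).comp (continuous_id.prodMk continuous_id))
    · intro p
      have hpU : ((p, p) : X × X) ∈ U := hdiag rfl
      have : 0 < infDist ((p, p) : X × X) Uᶜ := by
        rw [← (hUopen.isClosed_compl).notMem_iff_infDist_pos hne]
        simpa using hpU
      exact lt_min one_pos this
    · intro p q h
      have h' : dist p q < infDist ((p, p) : X × X) Uᶜ := lt_of_lt_of_le h (min_le_right _ _)
      by_contra hpq
      have hmem : ((p, q) : X × X) ∈ Uᶜ := fun hin => hpq (hUE hin)
      have hd : (0:ℝ) ≤ dist p q := dist_nonneg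
      have h0 := infDist_le_dist_of_mem (x := ((p,p) : X × X)) hmem
      rw [Prod.dist_eq] at h0
      simp only [dist_self] at h0
      have h3 := le_trans h0 (max_le hd le_rfl)
      linarith
    · intro p q h
      have h' : dist p q < infDist ((q, q) : X × X) Uᶜ := lt_of_lt_of_le h (min_le_right _ _)
      by_contra hpq
      have hmem : ((p, q) : X × X) ∈ Uᶜ := fun hin => hpq (hUE hin)
      have hd : (0:ℝ) ≤ dist p q := dist_nonneg
      have h0 := infDist_le_dist_of_mem (x := ((q,q) : X × X)) hmem
      rw [Prod.dist_eq] at h0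
      simp only [dist_self, dist_comm q p] at h0
      have h3 := le_trans h0 (max_le le_rfl hd)
      linarith
  · have hU : U = Set.univ := by
      rw [← Set.compl_empty_iff]
      exact Set.not_nonempty_iff_eq_empty.mp hne
    exact ⟨fun _ => 1, continuous_const, fun _ => one_pos,
      fun p q _ => hUE (hU ▸ Set.mem_univ _),
      fun p q _ => hUE (hU ▸ Set.mem_univ _)⟩

/-- On a locally compact metric space, the topological shadowing property phrased with
continuous functions `ε, δ : X → (0,∞)` is equivalent to the one phrased with
neighborhoods of the diagonal. -/
theorem TSP_iff_TSPTop {X : Type*} [MetricSpace X] [LocallyCompactSpace X]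
    (f : X ≃ₜ X) : TSP f ↔ TSPTop f := by
  constructor
  · intro htsp E hE
    obtain ⟨ε, hεc, hεpos, -, hε2⟩ := exists_cont_eps hE
    obtain ⟨δ, hδc, hδpos, hδ⟩ := htsp ε hεc hεpos
    refine ⟨{pq : X × X | dist pq.1 pq.2 < δ pq.1}, ?_, ?_⟩
    · refine (isOpen_lt (by continuity) (hδc.comp continuous_fst)).mem_nhdsSet.mpr ?_
      intro pq hpq
      rw [Set.mem_diagonal_iff] at hpq
      simp [Set.mem_setOf_eq, hpq, hδpos]
    · intro x hx
      obtain ⟨y, hy⟩ := hδ x hx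
      exact ⟨y, fun n => hε2 _ _ (hy n)⟩
  · intro htop ε hεc hεpos
    have hEopen : IsOpen {pq : X × X | dist pq.1 pq.2 < ε pq.2} :=
      isOpen_lt (by continuity) (hεc.comp continuous_snd)
    have hEmem : {pq : X × X | dist pq.1 pq.2 < ε pq.2} ∈ nhdsSet (Set.diagonal X) := by
      refine hEopen.mem_nhdsSet.mpr ?_
      intro pq hpq
      rw [Set.mem_diagonal_iff] at hpq
      simp [Set.mem_setOf_eq, hpq, hεpos]
    obtain ⟨D, hD, hDsh⟩ := htop _ hEmem
    obtain ⟨δ, hδc, hδpos, hδ1, -⟩ := exists_cont_eps hD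
    refine ⟨δ, hδc, hδpos, fun x hx => ?_⟩
    obtain ⟨y, hy⟩ := hDsh x (fun n => hδ1 _ _ (hx n))
    exact ⟨y, fun n => hy n⟩
end

section
/- For a metric space X and a homeomorphism f : X → X, the topological shadowing property where shadowing is measured by d(fⁿ(y), xₙ) < ε(xₙ) is equivalent to the variant where shadowing is measured by d(fⁿ(y), xₙ) < ε(fⁿ(y)), assuming X is locally compact. -/
open Metric Filter Topology

/-- Variant of the topological shadowing property in which the shadowing condition is
`d(fⁿ(y), xₙ) < ε(fⁿ(y))` instead of `d(fⁿ(y), xₙ) < ε(xₙ)`. -/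
def TSP' {X : Type*} [MetricSpace X] (f : X ≃ₜ X) : Prop :=
  ∀ ε : X → ℝ, Continuous ε → (∀ p, 0 < ε p) →
    ∃ δ : X → ℝ, Continuous δ ∧ (∀ p, 0 < δ p) ∧
      ∀ x : ℤ → X, IsPseudoOrbit f δ x →
        ∃ y : X, ∀ n : ℤ, dist (hzpow f n y) (x n) < ε (hzpow f n y)


private lemma key_lemma {X : Type*} [MetricSpace X] (ε : X → ℝ) (hc : Continuous ε)
    (hp : ∀ p, 0 < ε p) :
    ∃ ε' : X → ℝ, Continuous ε' ∧ (∀ p, 0 < ε' p) ∧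
      ∀ a b : X, dist a b < ε' a → dist a b < ε b := by
  classical
  cases isEmpty_or_nonempty X with
  | inl hE => exact ⟨ε, hc, hp, fun a => isEmptyElim a⟩
  | inr hN => ?_
  set ψ : X → ℝ := fun a => ⨅ b, (ε b + dist a b) with hψ
  have hbdd : ∀ a : X, BddBelow (Set.range fun b => ε b + dist a b) := by
    intro a
    refine ⟨0, ?_⟩
    rintro _ ⟨b, rfl⟩
    dsimp only
    have h1 := (hp b).le
    have h2 := dist_nonneg (x := a) (y := b)
    linarith
  have hle : ∀ a b : X, ψ a ≤ ε b + dist a b := fun a b => ciInf_le (hbdd a) b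
  have hstep : ∀ a a' : X, ψ a ≤ ψ a' + dist a a' := by
    intro a a'
    have h : ψ a - dist a a' ≤ ψ a' := by
      apply le_ciInf
      intro b
      have h1 : ψ a ≤ ε b + dist a b := hle a b
      have h2 : dist a b ≤ dist a a' + dist a' b := dist_triangle a a' b
      linarith
    linarith
  have hpos : ∀ a : X, 0 < ψ a := by
    intro a
    obtain ⟨r, hr, hball⟩ : ∃ r > 0, ∀ b, dist b a < r → ε a / 2 < ε b := by
      have h := (hc.continuousAt (x := a)).eventually (p := fun y => ε a / 2 < y)
        (eventually_gt_nhds (by linarith [hp a]))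
      rw [Metric.eventually_nhds_iff] at h
      obtain ⟨r, hr, h⟩ := h
      exact ⟨r, hr, fun b hb => h (by simpa [dist_comm] using hb)⟩
    have hmin : min r (ε a / 2) ≤ ψ a := by
      apply le_ciInf
      intro b
      rcases lt_or_ge (dist b a) r with h | h
      · have h1 := hball b h
        have h2 := dist_nonneg (x := a) (y := b)
        calc min r (ε a / 2) ≤ ε a / 2 := min_le_right _ _
          _ ≤ ε b + dist a b := by linarith
      · calc min r (ε a / 2) ≤ r := min_le_left _ _
          _ ≤ dist b a := h
          _ = dist a b := dist_comm b a
          _ ≤ ε b + dist a b := by linarith [(hp b).le]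
    have h0 : 0 < min r (ε a / 2) := lt_min hr (by linarith [hp a])
    linarith
  have hlip : LipschitzWith 1 ψ := by
    refine LipschitzWith.of_dist_le_mul ?_
    intro a a'
    rw [Real.dist_eq, NNReal.coe_one, one_mul, abs_sub_le_iff]
    have h1 := hstep a a'
    have h2 := hstep a' a
    rw [dist_comm a' a] at h2
    constructor <;> linarith
  refine ⟨fun a => ψ a / 2, hlip.continuous.div_const 2, fun p => by linarith [hpos p], ?_⟩
  intro a b hab
  have h1 : ψ a ≤ ε b + dist a b := hle a b
  linarith

/-- On a locally compact metric space the two variants of the topological shadowing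
property are equivalent. -/
theorem TSP_iff_TSP' {X : Type*} [MetricSpace X] [LocallyCompactSpace X]
    (f : X ≃ₜ X) : TSP f ↔ TSP' f := by
  constructor
  · intro h ε hc hp
    obtain ⟨ε', hc', hp', hkey⟩ := key_lemma ε hc hp
    obtain ⟨δ, hδc, hδp, hδ⟩ := h ε' hc' hp'
    refine ⟨δ, hδc, hδp, fun x hx => ?_⟩
    obtain ⟨y, hy⟩ := hδ x hx
    refine ⟨y, fun n => ?_⟩
    have := hkey (x n) (hzpow f n y) (by rw [dist_comm]; exact hy n)
    rw [dist_comm] at this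
    exact this
  · intro h ε hc hp
    obtain ⟨ε', hc', hp', hkey⟩ := key_lemma ε hc hp
    obtain ⟨δ, hδc, hδp, hδ⟩ := h ε' hc' hp'
    refine ⟨δ, hδc, hδp, fun x hx => ?_⟩
    obtain ⟨y, hy⟩ := hδ x hx
    exact ⟨y, fun n => hkey (hzpow f n y) (x n) (hy n)⟩
end

section
/- Let f : ℝ^d → ℝ^d be a homeomorphism with the topological shadowing property, and suppose for each k ∈ ℕ there exists y₋ₖ such that f^k(y₋ₖ) lies in the closed ball B̄(x₀, ε(x₀)) and d(x_{n−k}, fⁿ(y₋ₖ)) ≤ ε(x_{n−k}) for all n ≥ 0, where (xₙ)ₙ∈ℤ is a given sequence and ε is continuous and positive. If ỹ is a limit point of the sequence (f^k(y₋ₖ))ₖ, then d(x_l, f^l(ỹ)) ≤ ε(x_l) for all l ∈ ℤ; i.e., the full orbit of ỹ ε-shadows (xₙ)ₙ∈ℤ. -/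
open Metric Filter Topology

/-- Topological shadowing property (non-strict shadowing inequality). -/
def TSPle {X : Type*} [MetricSpace X] (f : X ≃ₜ X) : Prop :=
  ∀ ε : X → ℝ, Continuous ε → (∀ p, 0 < ε p) →
    ∃ δ : X → ℝ, Continuous δ ∧ (∀ p, 0 < δ p) ∧
      ∀ x : ℤ → X, IsPseudoOrbit f δ x →
        ∃ y : X, ∀ n : ℤ, dist (hzpow f n y) (x n) ≤ ε (x n)


lemma hpow_comm {X : Type*} [TopologicalSpace X] (f : X ≃ₜ X) (n : ℕ) (z : X) :
    hpow f n (f z) = f (hpow f n z) := by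
  induction n with
  | zero => rfl
  | succ n ih => simp [hpow, Homeomorph.trans_apply, ih]

lemma hzpow_succ {X : Type*} [TopologicalSpace X] (f : X ≃ₜ X) (n : ℤ) (z : X) :
    hzpow f (n + 1) z = f (hzpow f n z) := by
  cases n with
  | ofNat n => rfl
  | negSucc n =>
    cases n with
    | zero =>
      show hzpow f 0 z = f (hzpow f (Int.negSucc 0) z)
      simp [hzpow, hpow]
    | succ m =>
      show hzpow f (Int.negSucc m) z = f (hzpow f (Int.negSucc (m + 1)) z)
      have : hpow f (m + 1) (f ((hpow f (m + 1 + 1)).symm z))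
          = hpow f (m + 1) ((hpow f (m + 1)).symm z) := by
        rw [hpow_comm]
        show f (hpow f (m+1) ((hpow f (m+1+1)).symm z)) = _
        have h2 : f (hpow f (m+1) ((hpow f (m+1+1)).symm z))
            = hpow f (m+1+1) ((hpow f (m+1+1)).symm z) := rfl
        rw [h2]
        simp
      have := (hpow f (m + 1)).injective this
      show (hpow f (m + 1)).symm z = f ((hpow f (m + 1 + 1)).symm z)
      rw [← this]

lemma hzpow_comm_f {X : Type*} [TopologicalSpace X] (f : X ≃ₜ X) (n : ℤ) (z : X) :
    hzpow f n (f z) = f (hzpow f n z) := by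
  cases n with
  | ofNat n => exact hpow_comm f n z
  | negSucc n =>
    show (hpow f (n+1)).symm (f z) = f ((hpow f (n+1)).symm z)
    apply (hpow f (n+1)).injective
    rw [Homeomorph.apply_symm_apply, hpow_comm, Homeomorph.apply_symm_apply]

lemma hzpow_add_nat {X : Type*} [TopologicalSpace X] (f : X ≃ₜ X) (k : ℕ) (l : ℤ) (z : X) :
    hzpow f (l + k) z = hzpow f l (hzpow f (k : ℤ) z) := by
  induction k with
  | zero => simp; rfl
  | succ k ih =>
    have h1 : l + ((k : ℤ) + 1) = (l + k) + 1 := by ring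
    have h2 : ((k + 1 : ℕ) : ℤ) = (k : ℤ) + 1 := by push_cast; ring
    rw [h2, h1, hzpow_succ, ih, ← hzpow_comm_f, ← hzpow_succ]

/-- If each backward-shifted pseudo-orbit is forward shadowed by a point `y₋ₖ` with
`f^k(y₋ₖ)` in the closed ball `B̄(x₀, ε(x₀))`, then any limit point `ỹ` of `(f^k(y₋ₖ))ₖ`
fully `ε`-shadows the sequence `(xₙ)ₙ∈ℤ`. -/
theorem limit_point_shadows (d : ℕ)
    (f : EuclideanSpace ℝ (Fin d) ≃ₜ EuclideanSpace ℝ (Fin d)) (hf : TSPle f)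
    (x : ℤ → EuclideanSpace ℝ (Fin d)) (ε : EuclideanSpace ℝ (Fin d) → ℝ)
    (hεc : Continuous ε) (hεpos : ∀ p, 0 < ε p)
    (y : ℕ → EuclideanSpace ℝ (Fin d))
    (hball : ∀ k : ℕ, hzpow f (k : ℤ) (y k) ∈ closedBall (x 0) (ε (x 0)))
    (hshad : ∀ k : ℕ, ∀ n : ℕ,
      dist (x ((n : ℤ) - (k : ℤ))) (hzpow f (n : ℤ) (y k)) ≤ ε (x ((n : ℤ) - (k : ℤ))))
    (ytil : EuclideanSpace ℝ (Fin d)) (φ : ℕ → ℕ) (hφ : StrictMono φ)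
    (hlim : Tendsto (fun i => hzpow f ((φ i : ℕ) : ℤ) (y (φ i))) atTop (𝓝 ytil)) :
    ∀ l : ℤ, dist (x l) (hzpow f l ytil) ≤ ε (x l) := by
  intro l
  have hlim2 : Tendsto (fun i => hzpow f l (hzpow f ((φ i : ℕ) : ℤ) (y (φ i)))) atTop
      (𝓝 (hzpow f l ytil)) := ((hzpow f l).continuous.tendsto ytil).comp hlim
  have hd : Tendsto (fun i => dist (x l) (hzpow f l (hzpow f ((φ i : ℕ) : ℤ) (y (φ i))))) atTop
      (𝓝 (dist (x l) (hzpow f l ytil))) := tendsto_const_nhds.dist hlim2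
  refine le_of_tendsto hd ?_
  filter_upwards [eventually_ge_atTop (-l).toNat] with i hi
  have hile : i ≤ φ i := hφ.le_apply
  have h1 : (0 : ℤ) ≤ l + φ i := by omega
  have hn : (((l + φ i).toNat : ℕ) : ℤ) = l + φ i := Int.toNat_of_nonneg h1
  have key := hshad (φ i) (l + φ i).toNat
  rw [hn] at key
  have h3 : l + (φ i : ℤ) - (φ i : ℤ) = l := by ring
  rw [h3] at key
  rwa [hzpow_add_nat] at key
end
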